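/- arXiv:math/9204209 — 2 statements merged into one kernel-verified Lean document; each statement's English description precedes it below -/
import Mathlib

section
/- The ordering on finite strictly increasing sequences of ordinals defined by σ < τ iff either τ = τ₀‿σ for some nonempty sequence τ₀ (τ is σ with a prefix prepended), or τ = τ₀‿⟨ν'⟩‿σ₁ and σ = σ₀‿⟨ν⟩‿σ₁ with ν < ν' (they share a common terminal segment σ₁ and the entries immediately before it satisfy ν < ν'), is a strict linear order on the set of finite strictly increasing sequences of ordinals. -/
/-- The ordering on finite sequences of ordinals: `σ < τ` iff `τ = τ₀ ++ σ` for some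
nonempty `τ₀` (i.e. `τ` is `σ` with a nonempty prefix prepended), or `σ` and `τ` share a
common terminal segment `σ₁` and the entries immediately preceding it satisfy `ν < ν'`. -/
def SeqLT (σ τ : List Ordinal) : Prop :=
  (∃ τ₀ : List Ordinal, τ₀ ≠ [] ∧ τ = τ₀ ++ σ) ∨
  (∃ (σ₀ τ₀ σ₁ : List Ordinal) (ν ν' : Ordinal), ν < ν' ∧
      σ = σ₀ ++ ν :: σ₁ ∧ τ = τ₀ ++ ν' :: σ₁)

/-! Read backwards, `SeqLT` is the lexicographic order on lists: prepending to `σ` extends its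
reversal, and a common terminal segment becomes a common prefix. Irreflexivity, transitivity
and trichotomy are therefore those of the lexicographic order. -/

namespace List

theorem lex_iff_exists_append {α : Type*} {r : α → α → Prop} {l₁ l₂ : List α} :
    Lex r l₁ l₂ ↔ (∃ t, t ≠ [] ∧ l₂ = l₁ ++ t) ∨
      ∃ (p s₁ s₂ : List α) (a b : α), r a b ∧ l₁ = p ++ a :: s₁ ∧ l₂ = p ++ b :: s₂ := by
  constructor
  · intro h
    induction h with
    | nil => exact Or.inl ⟨_, cons_ne_nil _ _, rfl⟩
    | @cons a _ _ _ ih =>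
      rcases ih with ⟨t, ht, rfl⟩ | ⟨p, s₁, s₂, x, y, hxy, rfl, rfl⟩
      · exact Or.inl ⟨t, ht, rfl⟩
      · exact Or.inr ⟨a :: p, s₁, s₂, x, y, hxy, rfl, rfl⟩
    | rel h => exact Or.inr ⟨[], _, _, _, _, h, rfl, rfl⟩
  · rintro (⟨t, ht, rfl⟩ | ⟨p, s₁, s₂, a, b, hab, rfl, rfl⟩)
    · obtain ⟨a, t, rfl⟩ := exists_cons_of_ne_nil ht
      simpa using Lex.append_left r (Lex.nil : Lex r [] (a :: t)) l₁
    · exact Lex.append_left r (Lex.rel hab) p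

end List

theorem seqLT_iff_reverse_lt {σ τ : List Ordinal} : SeqLT σ τ ↔ σ.reverse < τ.reverse := by
  rw [← List.lex_lt, List.lex_iff_exists_append]
  constructor
  · rintro (⟨τ₀, hne, rfl⟩ | ⟨σ₀, τ₀, σ₁, ν, ν', hlt, rfl, rfl⟩)
    · exact Or.inl ⟨τ₀.reverse, by simpa using hne, by simp⟩
    · exact Or.inr ⟨σ₁.reverse, σ₀.reverse, τ₀.reverse, ν, ν', hlt, by simp, by simp⟩
  · rintro (⟨t, ht, h⟩ | ⟨p, s₁, s₂, a, b, hab, h₁, h₂⟩)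
    · rw [List.reverse_eq_iff] at h
      exact Or.inl ⟨t.reverse, by simpa using ht, by simp [h]⟩
    · rw [List.reverse_eq_iff] at h₁ h₂
      exact Or.inr ⟨s₁.reverse, s₂.reverse, p.reverse, a, b, hab, by simp [h₁], by simp [h₂]⟩

/-- `SeqLT` is a strict linear order on the set of finite strictly increasing sequences of
ordinals: it is irreflexive, transitive, and trichotomous. -/
theorem seqLT_isStrictLinearOrder :
    (∀ σ : {l : List Ordinal // l.Chain' (· < ·)}, ¬ SeqLT σ.1 σ.1) ∧
    (∀ σ τ ρ : {l : List Ordinal // l.Chain' (· < ·)},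
        SeqLT σ.1 τ.1 → SeqLT τ.1 ρ.1 → SeqLT σ.1 ρ.1) ∧
    (∀ σ τ : {l : List Ordinal // l.Chain' (· < ·)},
        SeqLT σ.1 τ.1 ∨ σ = τ ∨ SeqLT τ.1 σ.1) := by
  simp only [seqLT_iff_reverse_lt]
  refine ⟨fun σ => lt_irrefl _, fun σ τ ρ => lt_trans, fun σ τ => ?_⟩
  rw [← Subtype.coe_inj, ← List.reverse_inj]
  exact lt_trichotomy _ _
end

section
/- Let ⟨δ_λ⟩ be increasing ordinals and define the cut operation σ↾α on increasing sequences (restriction to entries ≤ δ_α). If b is a set of sequences linearly ordered by the prefix-extension order and γ ↦ σ↾γ preserves this order, then for fixed α the set {σ↾α : σ ∈ b} is linearly ordered, and its supremum τ_α (union) satisfies τ_α↾α' = τ_{α'} for α' < α whenever each σ↾α' is defined compatibly. -/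
open Set

/-- The cut `σ↾α` of an increasing (possibly transfinite) sequence of ordinals, viewed as a
set of ordinals: the restriction of `σ` to its entries `≤ δ α`. -/
def setCut (δ : Ordinal → Ordinal) (α : Ordinal) (σ : Set Ordinal) : Set Ordinal :=
  {x ∈ σ | x ≤ δ α}

/-- Let `⟨δ λ⟩` be increasing ordinals and let `b` be a set of sequences (of ordinals,
viewed as sets) that forms a chain. Then for fixed `α` the set of cuts `{σ↾α : σ ∈ b}`
is again a chain (linearly ordered), cutting commutes with taking the union (supremum)
of the chain: `(⋃ σ ∈ b, σ)↾α = ⋃ σ ∈ b, (σ↾α)`, and the suprema are compatible with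
further cuts: for `α' ≤ α`, `(τ_α)↾α' = τ_{α'}` where `τ_β` is the union of the cuts at
`β`. -/
theorem setCut_chain_sUnion (δ : Ordinal → Ordinal) (hδ : Monotone δ)
    (b : Set (Set Ordinal)) (hb : IsChain (· ⊆ ·) b) (α α' : Ordinal) (hα' : α' ≤ α) :
    IsChain (· ⊆ ·) (setCut δ α '' b) ∧
    setCut δ α (⋃₀ b) = ⋃ σ ∈ b, setCut δ α σ ∧
    setCut δ α' (⋃ σ ∈ b, setCut δ α σ) = ⋃ σ ∈ b, setCut δ α' σ := by
  refine ⟨?_, ?_, ?_⟩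
  · rintro _ ⟨s, hs, rfl⟩ _ ⟨t, ht, rfl⟩ hne
    rcases hb.total hs ht with h | h
    · exact Or.inl fun x hx => ⟨h hx.1, hx.2⟩
    · exact Or.inr fun x hx => ⟨h hx.1, hx.2⟩
  · ext x
    simp only [setCut, mem_sUnion, mem_setOf_eq, mem_iUnion]
    tauto
  · ext x
    simp only [setCut, mem_setOf_eq, mem_iUnion]
    constructor
    · rintro ⟨⟨s, hs, hxs, _⟩, hx'⟩
      exact ⟨s, hs, hxs, hx'⟩
    · rintro ⟨s, hs, hxs, hx'⟩
      exact ⟨⟨s, hs, hxs, hx'.trans (hδ hα')⟩, hx'⟩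
end
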